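/- Let k be real with 0 < |k| < 1/4, and define r(x:y:z) = |Φ_k(x,y,z)|/(x²+y²)² where Φ_k = x²y² − (x²+y²)z² + kz⁴. For the real map f₀ induced by F₀(x,y,z) = (−2xy(x²+y²−2kz²), y⁴−x⁴, 2xy(x²−y²)), one has r(f₀(x:y:z)) ≤ 4|k| · r(x:y:z) for all real (x,y,z) with (x,y) ≠ (0,0). Hence all orbits in ℙ²(ℝ)∖{(0:0:1)} converge to the Cassini curve Φ_k = 0. -/

import Mathlib

open Filter

/-- The real Cassini quartic `Φ_k(x,y,z) = x²y² − (x²+y²)z² + kz⁴`. -/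
noncomputable def cassiniPhiR (k x y z : ℝ) : ℝ :=
  x ^ 2 * y ^ 2 - (x ^ 2 + y ^ 2) * z ^ 2 + k * z ^ 4

/-- The real homogeneous map `F₀(x,y,z) = (−2xy(x²+y²−2kz²), y⁴−x⁴, 2xy(x²−y²))`. -/
noncomputable def cassiniF0R (k : ℝ) (v : ℝ × ℝ × ℝ) : ℝ × ℝ × ℝ :=
  (-2 * v.1 * v.2.1 * (v.1 ^ 2 + v.2.1 ^ 2 - 2 * k * v.2.2 ^ 2),
   v.2.1 ^ 4 - v.1 ^ 4,
   2 * v.1 * v.2.1 * (v.1 ^ 2 - v.2.1 ^ 2))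

/-- The distance-like ratio `r(x:y:z) = |Φ_k(x,y,z)|/(x²+y²)²` measuring distance from the
Cassini curve `Φ_k = 0`. -/
noncomputable def cassiniR (k : ℝ) (v : ℝ × ℝ × ℝ) : ℝ :=
  |cassiniPhiR k v.1 v.2.1 v.2.2| / (v.1 ^ 2 + v.2.1 ^ 2) ^ 2

/- The ratio `r` contracts because `Φ_k ∘ F₀ = 16k x²y²(x²−y²)⁴ Φ_k`, while the new denominator
`(X² + Y²)²` is at least `Y⁴ = (x²+y²)⁴(x²−y²)⁴`; the leftover factor `16x²y²/(x²+y²)²` is at most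
`4` by AM–GM. Iterating, `r` decays like `(4|k|)ⁿ`. -/

theorem tendsto_zero_of_le_mul_of_lt_one {u : ℕ → ℝ} {c : ℝ} (hu : ∀ n, 0 ≤ u n)
    (h : ∀ n, u (n + 1) ≤ c * u n) (hc₀ : 0 ≤ c) (hc₁ : c < 1) :
    Tendsto u atTop (nhds 0) := by
  have hgeom : Tendsto (fun n => c ^ n * u 0) atTop (nhds 0) := by
    simpa using (tendsto_pow_atTop_nhds_zero_of_lt_one hc₀ hc₁).mul_const (u 0)
  exact squeeze_zero hu (fun n => le_geom hc₀ n fun m _ => h m) hgeom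

theorem cassiniPhiR_cassiniF0R (k x y z : ℝ) :
    cassiniPhiR k (cassiniF0R k (x, y, z)).1 (cassiniF0R k (x, y, z)).2.1
        (cassiniF0R k (x, y, z)).2.2 =
      16 * k * x ^ 2 * y ^ 2 * (x ^ 2 - y ^ 2) ^ 4 * cassiniPhiR k x y z := by
  simp only [cassiniPhiR, cassiniF0R]
  ring

theorem pow_four_mul_pow_four_le_cassiniF0R (k x y z : ℝ) :
    (x ^ 2 + y ^ 2) ^ 4 * (x ^ 2 - y ^ 2) ^ 4 ≤
      ((cassiniF0R k (x, y, z)).1 ^ 2 + (cassiniF0R k (x, y, z)).2.1 ^ 2) ^ 2 := by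
  have hY : (cassiniF0R k (x, y, z)).2.1 ^ 2 = (x ^ 2 + y ^ 2) ^ 2 * (x ^ 2 - y ^ 2) ^ 2 := by
    simp only [cassiniF0R]
    ring
  calc (x ^ 2 + y ^ 2) ^ 4 * (x ^ 2 - y ^ 2) ^ 4
      = ((cassiniF0R k (x, y, z)).2.1 ^ 2) ^ 2 := by rw [hY]; ring
    _ ≤ _ := by gcongr; exact le_add_of_nonneg_left (sq_nonneg _)

theorem cassiniR_nonneg (k : ℝ) (v : ℝ × ℝ × ℝ) : 0 ≤ cassiniR k v := by
  unfold cassiniR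
  positivity

theorem cassiniR_cassiniF0R_le (k : ℝ) (v : ℝ × ℝ × ℝ) (hv : (v.1, v.2.1) ≠ (0, 0)) :
    cassiniR k (cassiniF0R k v) ≤ 4 * |k| * cassiniR k v := by
  obtain ⟨x, y, z⟩ := v
  have hS : 0 < x ^ 2 + y ^ 2 := by
    by_contra! h
    exact hv (by simp only [Prod.mk.injEq]; constructor <;> nlinarith [sq_nonneg x, sq_nonneg y])
  set P := |cassiniPhiR k x y z|
  have hamgm : 4 * x ^ 2 * y ^ 2 ≤ (x ^ 2 + y ^ 2) ^ 2 := four_mul_le_sq_add _ _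
  have hden := pow_four_mul_pow_four_le_cassiniF0R k x y z
  refine div_le_of_le_mul₀ (by positivity) (mul_nonneg (by positivity) (cassiniR_nonneg k _)) ?_
  calc |cassiniPhiR k (cassiniF0R k (x, y, z)).1 (cassiniF0R k (x, y, z)).2.1
          (cassiniF0R k (x, y, z)).2.2|
      = 4 * |k| * P * (4 * x ^ 2 * y ^ 2) * (x ^ 2 - y ^ 2) ^ 4 := by
        have hfactor : 0 ≤ 16 * x ^ 2 * y ^ 2 * (x ^ 2 - y ^ 2) ^ 4 := by positivity
        rw [cassiniPhiR_cassiniF0R, show 16 * k * x ^ 2 * y ^ 2 * (x ^ 2 - y ^ 2) ^ 4 =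
            k * (16 * x ^ 2 * y ^ 2 * (x ^ 2 - y ^ 2) ^ 4) by ring,
          abs_mul, abs_mul, abs_of_nonneg hfactor]
        ring
    _ ≤ 4 * |k| * P * (x ^ 2 + y ^ 2) ^ 2 * (x ^ 2 - y ^ 2) ^ 4 := by gcongr
    _ = 4 * |k| * (P / (x ^ 2 + y ^ 2) ^ 2) * ((x ^ 2 + y ^ 2) ^ 4 * (x ^ 2 - y ^ 2) ^ 4) := by
        field_simp
    _ ≤ 4 * |k| * (P / (x ^ 2 + y ^ 2) ^ 2) *
          ((cassiniF0R k (x, y, z)).1 ^ 2 + (cassiniF0R k (x, y, z)).2.1 ^ 2) ^ 2 := by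
        gcongr

theorem cassini_trapped_attractor_general (k : ℝ) (hk : |k| < 1 / 4) :
    (∀ v : ℝ × ℝ × ℝ, (v.1, v.2.1) ≠ ((0 : ℝ), (0 : ℝ)) →
      cassiniR k (cassiniF0R k v) ≤ 4 * |k| * cassiniR k v) ∧
    (∀ v : ℝ × ℝ × ℝ,
      (∀ n : ℕ, (((cassiniF0R k)^[n] v).1, ((cassiniF0R k)^[n] v).2.1) ≠ ((0 : ℝ), (0 : ℝ))) →
      Tendsto (fun n : ℕ => cassiniR k ((cassiniF0R k)^[n] v)) atTop (nhds 0)) := by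
  refine ⟨cassiniR_cassiniF0R_le k, fun v hv => ?_⟩
  refine tendsto_zero_of_le_mul_of_lt_one (c := 4 * |k|) (fun n => cassiniR_nonneg k _)
    (fun n => ?_) (by positivity) (by linarith)
  rw [Function.iterate_succ_apply']
  exact cassiniR_cassiniF0R_le k _ (hv n)

/-- **A trapped attractor for the Cassini map** (Theorem 7.2, case `a = 0`).
Let `0 < |k| < 1/4`.  For the real map `f₀` induced by `F₀`, one has
`r(f₀(x:y:z)) ≤ 4|k|·r(x:y:z)` for all real homogeneous representatives `(x,y,z)` with
`(x,y) ≠ (0,0)`.  Hence every orbit in `ℙ²(ℝ) ∖ {(0:0:1)}` (i.e. whose iterates all satisfy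
`(x,y) ≠ (0,0)`) converges to the Cassini curve `Φ_k = 0`, in the sense that `r → 0` along
the orbit. -/
theorem cassini_trapped_attractor (k : ℝ) (hk0 : k ≠ 0) (hk : |k| < 1 / 4) :
    (∀ v : ℝ × ℝ × ℝ, (v.1, v.2.1) ≠ ((0 : ℝ), (0 : ℝ)) →
      cassiniR k (cassiniF0R k v) ≤ 4 * |k| * cassiniR k v) ∧
    (∀ v : ℝ × ℝ × ℝ,
      (∀ n : ℕ, (((cassiniF0R k)^[n] v).1, ((cassiniF0R k)^[n] v).2.1) ≠ ((0 : ℝ), (0 : ℝ))) →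
      Tendsto (fun n : ℕ => cassiniR k ((cassiniF0R k)^[n] v)) atTop (nhds 0)) :=
  cassini_trapped_attractor_general k hk
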